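/- Let M be a maximal subalgebra of the Lie algebra W_n that is also an A-submodule of W_n (a polynomial subalgebra) and has rank n over A, i.e., M contains n elements that are linearly independent over A. Then there exists a nonzero proper ideal I of A such that M = { D ∈ W_n : D(I) ⊆ I }. -/

import Mathlib

/-!
Since `M` has rank `n` in the free module `Wn K n` of rank `n`, every derivation has a nonzero
multiple in `M`, so `I = {f | f • Wn K n ⊆ M}` is a nonzero ideal, proper because `M ≠ ⊤`.
The Leibniz rule `D f • E = ⁅D, f • E⁆ - f • ⁅D, E⁆` shows that `M` stabilises `I`. The
stabiliser of `I` is not everything: in characteristic zero, an element of minimal degree of a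
nonzero ideal closed under all `∂/∂xᵢ` is a nonzero constant. Maximality of `M` then forces `M`
to be this stabiliser.
-/

open MvPolynomial

/-- `Wn K n` is the Lie algebra of all `K`-derivations of `K[x_1, …, x_n]`. -/
abbrev Wn (K : Type) [Field K] (n : ℕ) :=
  Derivation K (MvPolynomial (Fin n) K) (MvPolynomial (Fin n) K)

namespace MvPolynomial

variable {σ R : Type*} [CommSemiring R]

theorem totalDegree_pderiv_lt {i : σ} {f : MvPolynomial σ R} (hf : pderiv i f ≠ 0) :
    (pderiv i f).totalDegree < f.totalDegree := by
  obtain ⟨m, hm, hdeg⟩ := (pderiv i f).support.exists_mem_eq_sup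
    (support_nonempty.mpr hf) fun s => s.sum fun _ e => e
  have hcoeff : coeff (m + Finsupp.single i 1) f ≠ 0 := by
    intro h
    rw [mem_support_iff, coeff_pderiv, h, zero_mul] at hm
    exact hm rfl
  have := le_totalDegree (mem_support_iff.mpr hcoeff)
  rw [Finsupp.sum_add_index' (fun _ => rfl) (fun _ _ _ => rfl),
    Finsupp.sum_single_index rfl] at this
  rw [totalDegree, hdeg]
  omega

theorem totalDegree_eq_zero_of_forall_pderiv_eq_zero [NoZeroDivisors R] [CharZero R]
    {f : MvPolynomial σ R} (hf : ∀ i, pderiv i f = 0) : f.totalDegree = 0 := by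
  refine (totalDegree_eq_zero_iff σ f).mpr fun m hm i => ?_
  by_contra hmi
  have hm' : m - Finsupp.single i 1 + Finsupp.single i 1 = m :=
    tsub_add_cancel_of_le (Finsupp.single_le_iff.mpr (Nat.one_le_iff_ne_zero.mpr hmi))
  have := coeff_pderiv (i := i) f (m - Finsupp.single i 1)
  rw [hf i, coeff_zero, hm'] at this
  exact mul_ne_zero (mem_support_iff.mp hm) (Nat.cast_add_one_ne_zero _) this.symm

theorem _root_.Ideal.eq_bot_or_eq_top_of_forall_pderiv_mem {K : Type*} [Field K] [CharZero K]
    {I : Ideal (MvPolynomial σ K)} (hI : ∀ i, ∀ f ∈ I, pderiv i f ∈ I) : I = ⊥ ∨ I = ⊤ := by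
  refine or_iff_not_imp_left.mpr fun hbot => ?_
  obtain ⟨f, hfI, hf0⟩ := Submodule.exists_mem_ne_zero_of_ne_bot hbot
  induction h : f.totalDegree using Nat.strong_induction_on generalizing f with
  | _ d ih =>
    by_cases hconst : ∀ i, pderiv i f = 0
    · have hfC := totalDegree_eq_zero_iff_eq_C.mp
        (totalDegree_eq_zero_of_forall_pderiv_eq_zero hconst)
      refine I.eq_top_of_isUnit_mem hfI ?_
      rw [hfC]
      exact (isUnit_iff_ne_zero.mpr fun h0 => hf0 (by rw [hfC, h0, map_zero])).map C
    · obtain ⟨i, hi⟩ := not_forall.mp hconst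
      exact ih _ (h ▸ totalDegree_pderiv_lt hi) _ (hI i f hfI) hi rfl

noncomputable def derivationEquivFun :
    Derivation R (MvPolynomial σ R) (MvPolynomial σ R) ≃ₗ[MvPolynomial σ R]
      (σ → MvPolynomial σ R) where
  toFun D i := D (X i)
  map_add' _ _ := rfl
  map_smul' _ _ := rfl
  invFun := mkDerivation R
  left_inv D := derivation_ext fun i => mkDerivation_X _ _ _
  right_inv g := by funext i; exact mkDerivation_X R g i

noncomputable def derivationBasis [Finite σ] :
    Module.Basis σ (MvPolynomial σ R) (Derivation R (MvPolynomial σ R) (MvPolynomial σ R)) :=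
  .ofEquivFun derivationEquivFun

end MvPolynomial

namespace Module.Basis

variable {R W ι : Type*} [CommRing R] [IsDomain R] [AddCommGroup W] [Module R W] [Fintype ι]
  {N : Submodule R W} {v : ι → W}

theorem exists_ne_zero_smul_mem_of_linearIndependent (b : Basis ι R W) (hvN : ∀ i, v i ∈ N)
    (hv : LinearIndependent R v) (w : W) : ∃ c : R, c ≠ 0 ∧ c • w ∈ N := by
  have hdep : ¬ LinearIndependent R fun o : Option ι => o.elim w v := fun h => by
    simpa using b.card_le_card_of_linearIndependent h
  obtain ⟨g, hg, o, ho⟩ := Fintype.not_linearIndependent_iff.mp hdep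
  simp only [Fintype.sum_option, Option.elim] at hg
  have hg0 : g none ≠ 0 := by
    intro h0
    rw [h0, zero_smul, zero_add] at hg
    have hsome := Fintype.linearIndependent_iff.mp hv (fun i => g (some i)) hg
    cases o with
    | none => exact ho h0
    | some i => exact ho (hsome i)
  refine ⟨g none, hg0, ?_⟩
  rw [← neg_eq_of_add_eq_zero_left hg]
  exact N.neg_mem (N.sum_mem fun i _ => N.smul_mem _ (hvN i))

theorem colon_univ_ne_bot_of_linearIndependent (b : Basis ι R W) (hvN : ∀ i, v i ∈ N)
    (hv : LinearIndependent R v) : N.colon Set.univ ≠ ⊥ := by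
  choose c hc0 hcN using fun i => b.exists_ne_zero_smul_mem_of_linearIndependent hvN hv (b i)
  have hprod : ∏ i, c i ∈ N.colon Set.univ := Submodule.mem_colon.mpr fun w _ => by
    rw [← b.sum_repr w, Finset.smul_sum]
    refine N.sum_mem fun i _ => ?_
    obtain ⟨d, hd⟩ := Finset.dvd_prod_of_mem c (Finset.mem_univ i)
    rw [smul_comm, hd, mul_comm, mul_smul]
    exact N.smul_mem _ (N.smul_mem _ (hcN i))
  exact fun h => Finset.prod_ne_zero_iff.mpr (fun i _ => hc0 i) (by simpa [h] using hprod)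

end Module.Basis

section Stabilizer

variable {K A : Type*} [CommRing K] [CommRing A] [Algebra K A]

namespace Derivation

theorem lie_smul_right (D E : Derivation K A A) (f : A) : ⁅D, f • E⁆ = D f • E + f • ⁅D, E⁆ := by
  ext g
  simp only [commutator_apply, smul_apply, add_apply, leibniz, smul_eq_mul]
  ring

variable (K) in
def idealStabilizer (I : Ideal A) : LieSubalgebra K (Derivation K A A) where
  carrier := {D | ∀ f ∈ I, D f ∈ I}
  add_mem' hD hE f hf := I.add_mem (hD f hf) (hE f hf)
  zero_mem' _ _ := I.zero_mem
  smul_mem' c D hD f hf := I.smul_of_tower_mem c (hD f hf)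
  lie_mem' hD hE f hf := by
    rw [commutator_apply]
    exact I.sub_mem (hD _ (hE f hf)) (hE _ (hD f hf))

end Derivation

namespace LieSubalgebra

def toSubmoduleOfSMulMem (M : LieSubalgebra K (Derivation K A A))
    (hM : ∀ f : A, ∀ D ∈ M, f • D ∈ M) : Submodule A (Derivation K A A) where
  carrier := M
  add_mem' := M.add_mem
  zero_mem' := M.zero_mem
  smul_mem' := hM

theorem le_idealStabilizer_colon (M : LieSubalgebra K (Derivation K A A))
    (hM : ∀ f : A, ∀ D ∈ M, f • D ∈ M) :
    M ≤ Derivation.idealStabilizer K ((M.toSubmoduleOfSMulMem hM).colon Set.univ) := by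
  intro D hD f hf
  simp only [Submodule.mem_colon, Set.mem_univ, forall_const] at hf ⊢
  intro E
  rw [show D f • E = ⁅D, f • E⁆ - f • ⁅D, E⁆ by rw [Derivation.lie_smul_right]; abel]
  exact sub_mem (M.lie_mem hD (hf E)) (hf _)

end LieSubalgebra

end Stabilizer

theorem Derivation.idealStabilizer_ne_top {σ K : Type*} [Field K] [CharZero K]
    {I : Ideal (MvPolynomial σ K)} (hbot : I ≠ ⊥) (htop : I ≠ ⊤) :
    idealStabilizer K I ≠ ⊤ := fun h =>
  (Ideal.eq_bot_or_eq_top_of_forall_pderiv_mem fun i =>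
    (h ▸ LieSubalgebra.mem_top (pderiv i) : pderiv i ∈ idealStabilizer K I)).elim hbot htop

theorem polynomial_maximal_subalgebra_of_rank_n_is_ideal_stabilizer_general
    {K : Type} [Field K] [CharZero K] {n : ℕ}
    (M : LieSubalgebra K (Wn K n)) (hMtop : M ≠ ⊤)
    (hmax : ∀ L : LieSubalgebra K (Wn K n), M < L → L = ⊤)
    (hmod : ∀ f : MvPolynomial (Fin n) K, ∀ D ∈ M, f • D ∈ M)
    (hrk : ∃ v : Fin n → Wn K n, (∀ i, v i ∈ M) ∧
      LinearIndependent (MvPolynomial (Fin n) K) v) :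
    ∃ I : Ideal (MvPolynomial (Fin n) K), I ≠ ⊥ ∧ I ≠ ⊤ ∧
      (M : Set (Wn K n)) = {D : Wn K n | ∀ f ∈ I, D f ∈ I} := by
  obtain ⟨v, hvM, hv⟩ := hrk
  set I := (M.toSubmoduleOfSMulMem hmod).colon Set.univ
  have hbot : I ≠ ⊥ := derivationBasis.colon_univ_ne_bot_of_linearIndependent hvM hv
  have htop : I ≠ ⊤ := by
    rw [Ne, Submodule.colon_eq_top_iff_subset]
    exact fun h => hMtop (eq_top_iff.mpr fun D _ => h (Set.mem_univ D))
  have hM : M = Derivation.idealStabilizer K I := by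
    by_contra hne
    exact Derivation.idealStabilizer_ne_top hbot htop
      (hmax _ ((M.le_idealStabilizer_colon hmod).lt_of_ne hne))
  exact ⟨I, hbot, htop, by rw [hM]; rfl⟩

/-- A maximal Lie subalgebra `M` of `Wn` that is an `A`-submodule (a polynomial
subalgebra) and has rank `n` over `A` is the stabilizer
`M = { D ∈ Wn : D(I) ⊆ I }` of some nonzero proper ideal `I` of `A`. -/
theorem polynomial_maximal_subalgebra_of_rank_n_is_ideal_stabilizer
    {K : Type} [Field K] [IsAlgClosed K] [CharZero K] {n : ℕ}
    (M : LieSubalgebra K (Wn K n)) (hMtop : M ≠ ⊤)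
    (hmax : ∀ L : LieSubalgebra K (Wn K n), M < L → L = ⊤)
    (hmod : ∀ f : MvPolynomial (Fin n) K, ∀ D ∈ M, f • D ∈ M)
    (hrk : ∃ v : Fin n → Wn K n, (∀ i, v i ∈ M) ∧
      LinearIndependent (MvPolynomial (Fin n) K) v) :
    ∃ I : Ideal (MvPolynomial (Fin n) K), I ≠ ⊥ ∧ I ≠ ⊤ ∧
      (M : Set (Wn K n)) = {D : Wn K n | ∀ f ∈ I, D f ∈ I} :=
  polynomial_maximal_subalgebra_of_rank_n_is_ideal_stabilizer_general M hMtop hmax hmod hrk
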